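/- arXiv:1706.08414 — 2 statements merged into one kernel-verified Lean document; each statement's English description precedes it below -/
import Mathlib

section
/- Let H and G be finite simple graphs. Then the number of injective homomorphisms from H to G equals the sum, over all H-loop-free partitions ρ of V(H), of μ(⊥, ρ) times the number of homomorphisms from H/ρ to G, where μ is the Möbius function of the lattice of all partitions of V(H) ordered by refinement and ⊥ is the partition into singletons. -/
open scoped Classical

/-- The quotient graph `H/ρ`: vertices are the blocks of the partition (equivalence
classes of the setoid `ρ`), and two distinct blocks are adjacent iff they contain
adjacent vertices of `H`. -/
def quotientGraph {V : Type} (H : SimpleGraph V) (ρ : Setoid V) :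
    SimpleGraph (Quotient ρ) where
  Adj B B' := B ≠ B' ∧ ∃ u v : V, Quotient.mk ρ u = B ∧ Quotient.mk ρ v = B' ∧ H.Adj u v
  symm := by
    constructor
    rintro B B' ⟨hne, u, v, hu, hv, h⟩
    exact ⟨hne.symm, v, u, hv, hu, h.symm⟩
  loopless := by
    constructor
    rintro B ⟨hne, -⟩
    exact hne rfl

/-- A partition (setoid) `ρ` is `H`-loop-free if no block contains two vertices that are
adjacent in `H`. -/
def LoopFreePartition {V : Type} (H : SimpleGraph V) (ρ : Setoid V) : Prop :=
  ∀ u v : V, ρ.r u v → ¬ H.Adj u v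

/-!
Group the homomorphisms `φ : H → G` by their kernel partitions `ker φ`. A homomorphism
factors through `H/ρ` exactly when `ρ ≤ ker φ`, so `#Hom(H/ρ, G) = #{φ | ρ ≤ ker φ}` for
loop-free `ρ`, and kernels of homomorphisms are themselves loop-free. Möbius inversion on
the partition lattice then isolates the homomorphisms with `ker φ = ⊥`, i.e. the injective ones.
-/

instance Setoid.instFinite {α : Type*} [Finite α] : Finite (Setoid α) :=
  Finite.of_injective _ fun _ _ => Setoid.eq_iff_rel_eq.mpr

open Finset in
theorem finsum_mem_moebius_mul_card_le {α X : Type*} [PartialOrder α] [OrderBot α]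
    [Finite α] [Finite X] (μ : α → ℤ)
    (hμ : ∀ a, ∑ᶠ b ∈ Set.Iic a, μ b = if a = ⊥ then 1 else 0)
    (f : X → α) {S : Set α} (hS : ∀ x, Set.Iic (f x) ⊆ S) :
    ∑ᶠ a ∈ S, μ a * Nat.card {x // a ≤ f x} = Nat.card {x // f x = ⊥} := by
  cases nonempty_fintype α
  cases nonempty_fintype X
  simp only [Nat.card_eq_fintype_card, Fintype.card_subtype, finsum_mem_eq_toFinset_sum] at hμ ⊢
  calc ∑ a ∈ S.toFinset, μ a * (#{x | a ≤ f x} : ℤ)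
      = ∑ a ∈ S.toFinset, ∑ x, if a ≤ f x then μ a else 0 := by
        simp [Finset.sum_ite, mul_comm]
    _ = ∑ x, ∑ a ∈ S.toFinset, if a ≤ f x then μ a else 0 := Finset.sum_comm
    _ = ∑ x, ∑ a ∈ (Set.Iic (f x)).toFinset, μ a := by
        refine Finset.sum_congr rfl fun x _ => ?_
        rw [← Finset.sum_filter]
        congr 1
        ext a
        simpa using fun h => hS x h
    _ = #{x | f x = ⊥} := by simp [hμ]

section

variable {V W : Type} {H : SimpleGraph V} {G : SimpleGraph W}

theorem LoopFreePartition.mono {ρ σ : Setoid V} (hσ : LoopFreePartition H σ) (h : ρ ≤ σ) :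
    LoopFreePartition H ρ :=
  fun u v huv => hσ u v (h huv)

theorem loopFreePartition_ker (φ : H →g G) : LoopFreePartition H (Setoid.ker φ) :=
  fun _ _ h hadj => (φ.map_rel hadj).ne (Setoid.ker_def.mp h)

def quotientGraphHomEquiv {ρ : Setoid V} (hρ : LoopFreePartition H ρ) :
    (quotientGraph H ρ →g G) ≃ {φ : H →g G // ρ ≤ Setoid.ker φ} where
  toFun ψ := ⟨⟨fun v => ψ (Quotient.mk ρ v), fun {u v} h =>
      ψ.map_rel ⟨fun he => hρ u v (Quotient.exact he) h, u, v, rfl, rfl, h⟩⟩,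
    fun _ _ h => congrArg ψ (Quotient.sound h)⟩
  invFun φ := ⟨Quotient.lift φ.1 fun _ _ h => φ.2 h, by
      rintro _ _ ⟨-, u, v, rfl, rfl, hadj⟩
      exact φ.1.map_rel hadj⟩
  left_inv ψ := by
    ext B
    induction B using Quotient.ind
    rfl
  right_inv _ := rfl

end

/-- **Lovász's identity via Möbius inversion over the partition lattice.**
The number of injective homomorphisms from `H` to `G` equals the sum, over all
`H`-loop-free partitions `ρ` of `V(H)`, of `μ(⊥, ρ) · #Hom(H/ρ, G)`, where `μ = μ(⊥, ·)`
is the Möbius function of the lattice of all partitions of `V(H)` ordered by refinement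
(characterized by `∑_{σ ≤ ρ} μ(σ) = [ρ = ⊥]`) and `⊥` is the partition into
singletons. -/
theorem card_embedding_eq_moebius_sum {V W : Type} [Fintype V] [Fintype W]
    (H : SimpleGraph V) (G : SimpleGraph W)
    (μ : Setoid V → ℤ)
    (hμ : ∀ ρ : Setoid V,
      (∑ᶠ σ ∈ {σ : Setoid V | σ ≤ ρ}, μ σ) = if ρ = ⊥ then 1 else 0) :
    (Nat.card {φ : H →g G // Function.Injective φ} : ℤ) =
      ∑ᶠ ρ ∈ {ρ : Setoid V | LoopFreePartition H ρ},
        μ ρ * Nat.card (quotientGraph H ρ →g G) := by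
  have hinj : Nat.card {φ : H →g G // Function.Injective φ} =
      Nat.card {φ : H →g G // Setoid.ker φ = ⊥} :=
    Nat.card_congr (Equiv.subtypeEquivRight fun φ => Setoid.injective_iff_ker_bot φ)
  have hquot : ∀ ρ ∈ {ρ : Setoid V | LoopFreePartition H ρ},
      μ ρ * (Nat.card (quotientGraph H ρ →g G) : ℤ) =
        μ ρ * Nat.card {φ : H →g G // ρ ≤ Setoid.ker φ} :=
    fun _ hρ => by rw [Nat.card_congr (quotientGraphHomEquiv hρ)]
  rw [finsum_mem_congr rfl hquot, hinj]
  exact (finsum_mem_moebius_mul_card_le μ hμ (fun φ : H →g G => Setoid.ker φ)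
    fun φ _ hσ => (loopFreePartition_ker φ).mono hσ).symm
end

section
/- Let H and G be finite simple graphs, let R be a finite simple graph with vertex set V(H), and let σ ≤ ρ be R-connected partitions of V(H) (σ refines ρ) that are both H-loop-free. Then the number of homomorphisms φ from H/σ to G with the property that for every edge {u,v} of R one has φ([u]_σ) = φ([v]_σ) if and only if u and v lie in the same block of ρ, equals the cardinality of Hom(H/ρ, G)[R]. Here [x]_σ denotes the block of σ containing x. -/
/-- A partition (setoid) `ρ` of `V` is `R`-connected if every block induces a connected
subgraph of `R`. -/
def RConnectedPartition {V : Type} (R : SimpleGraph V) (ρ : Setoid V) : Prop :=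
  ∀ v : V, (R.induce {u : V | ρ.r u v}).Connected

/-- `Hom(H/ρ, G)[R]`: homomorphisms `φ` from `H/ρ` to `G` such that `φ(B) ≠ φ(B')`
whenever `B, B'` are distinct blocks containing vertices `u ∈ B`, `v ∈ B'` with `{u,v}`
an edge of `R`. -/
def RRestrictedHom {V W : Type} (H : SimpleGraph V) (G : SimpleGraph W) (R : SimpleGraph V)
    (ρ : Setoid V) : Type :=
  {φ : quotientGraph H ρ →g G //
    ∀ u v : V, R.Adj u v → Quotient.mk ρ u ≠ Quotient.mk ρ v →
      φ (Quotient.mk ρ u) ≠ φ (Quotient.mk ρ v)}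

namespace RConnectedPartition

variable {V X : Type} {R : SimpleGraph V} {ρ : Setoid V}

theorem apply_eq_of_rel (hρ : RConnectedPartition R ρ) (f : V → X)
    (hf : ∀ u v, R.Adj u v → ρ.r u v → f u = f v) {u v : V} (huv : ρ.r u v) : f u = f v := by
  obtain ⟨w⟩ := hρ v ⟨u, huv⟩ ⟨v, ρ.refl v⟩
  suffices h : ∀ a b : {x // ρ.r x v}, (R.induce {x | ρ.r x v}).Walk a b → f a = f b from
    h _ _ w
  intro a b p
  induction p with
  | nil => rfl
  | @cons a b _ hab _ ih => exact (hf _ _ hab (ρ.trans a.2 (ρ.symm b.2))).trans ih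

end RConnectedPartition

namespace quotientGraph

variable {V W : Type} {H : SimpleGraph V} {G : SimpleGraph W} {σ ρ : Setoid V}

def coarsen (hle : σ ≤ ρ) (hρ : LoopFreePartition H ρ) :
    quotientGraph H σ →g quotientGraph H ρ where
  toFun := Quotient.lift (Quotient.mk ρ) fun _ _ h => Quotient.sound (hle h)
  map_rel' := by
    rintro _ _ ⟨-, u, v, rfl, rfl, huv⟩
    exact ⟨fun h => hρ u v (Quotient.exact h) huv, u, v, rfl, rfl, huv⟩

def lift (hle : σ ≤ ρ) (φ : quotientGraph H σ →g G)
    (hφ : ∀ u v, ρ.r u v → φ (Quotient.mk σ u) = φ (Quotient.mk σ v)) :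
    quotientGraph H ρ →g G where
  toFun := Quotient.lift (fun v => φ (Quotient.mk σ v)) hφ
  map_rel' := by
    rintro _ _ ⟨hne, u, v, rfl, rfl, huv⟩
    exact φ.map_rel ⟨fun h => hne (Quotient.sound (hle (Quotient.exact h))), u, v, rfl, rfl, huv⟩

end quotientGraph

section

open quotientGraph

variable {V W : Type} {H : SimpleGraph V} {G : SimpleGraph W} {R : SimpleGraph V}
  {σ ρ : Setoid V}

def classEquivRestrictedHom (hle : σ ≤ ρ) (hρc : RConnectedPartition R ρ)
    (hρl : LoopFreePartition H ρ) :
    {φ : quotientGraph H σ →g G //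
        ∀ u v : V, R.Adj u v → (φ (Quotient.mk σ u) = φ (Quotient.mk σ v) ↔ ρ.r u v)} ≃
      RRestrictedHom H G R ρ where
  toFun φ :=
    ⟨lift hle φ.1 fun _ _ => hρc.apply_eq_of_rel _ fun u v huv => (φ.2 u v huv).2,
      fun u v huv hne h => hne (Quotient.sound ((φ.2 u v huv).1 h))⟩
  invFun ψ :=
    ⟨ψ.1.comp (coarsen hle hρl), fun u v huv =>
      ⟨fun h => by_contra fun hr => ψ.2 u v huv (fun he => hr (Quotient.exact he)) h,
        fun h => congrArg ψ.1 (Quotient.sound h)⟩⟩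
  left_inv _ := Subtype.ext <| RelHom.ext <| Quotient.ind fun _ => rfl
  right_inv _ := Subtype.ext <| RelHom.ext <| Quotient.ind fun _ => rfl

end

theorem card_class_eq_card_restrictedHom_general {V W : Type}
    (H : SimpleGraph V) (G : SimpleGraph W) (R : SimpleGraph V)
    (σ ρ : Setoid V) (hle : σ ≤ ρ)
    (hρc : RConnectedPartition R ρ)
    (hρl : LoopFreePartition H ρ) :
    Nat.card {φ : quotientGraph H σ →g G //
        ∀ u v : V, R.Adj u v →
          (φ (Quotient.mk σ u) = φ (Quotient.mk σ v) ↔ ρ.r u v)} =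
      Nat.card (RRestrictedHom H G R ρ) :=
  Nat.card_congr (classEquivRestrictedHom hle hρc hρl)

/-- **The bijection between an equivalence class of homomorphisms and restricted
homomorphisms.** Let `σ ≤ ρ` be `R`-connected, `H`-loop-free partitions of `V(H)`.
Then the number of homomorphisms `φ : H/σ → G` such that, for every edge `{u,v}` of `R`,
`φ([u]_σ) = φ([v]_σ)` holds if and only if `u` and `v` lie in the same block of `ρ`,
equals `#Hom(H/ρ, G)[R]`. -/
theorem card_class_eq_card_restrictedHom {V W : Type} [Fintype V] [Fintype W]
    (H : SimpleGraph V) (G : SimpleGraph W) (R : SimpleGraph V)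
    (σ ρ : Setoid V) (hle : σ ≤ ρ)
    (hσc : RConnectedPartition R σ) (hρc : RConnectedPartition R ρ)
    (hσl : LoopFreePartition H σ) (hρl : LoopFreePartition H ρ) :
    Nat.card {φ : quotientGraph H σ →g G //
        ∀ u v : V, R.Adj u v →
          (φ (Quotient.mk σ u) = φ (Quotient.mk σ v) ↔ ρ.r u v)} =
      Nat.card (RRestrictedHom H G R ρ) :=
  card_class_eq_card_restrictedHom_general H G R σ ρ hle hρc hρl
end
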